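/- arXiv:1711.08426 — 3 statements merged into one kernel-verified Lean document; each statement's English description precedes it below -/
import Mathlib

section
/- Let B and A be matrices with the same number of columns such that (5/6)BᵀB ⪯ AᵀA ⪯ (6/5)BᵀB, with BᵀB positive definite. For x₀ ∈ ℝ^d and η := Ax₀ − b, define z := x₀ − (BᵀB)^{-1}Aᵀη and x* := (AᵀA)^{-1}Aᵀb. Then (1/2)‖Az − Ax*‖₂² ≤ (4/10)‖Ax₀ − Ax*‖₂². -/
/-!
Write `M = BᵀB`, `N = AᵀA`, `e = x₀ - x*` and `u = M⁻¹ N e`; since `N x* = Aᵀ b`, the error after the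
step is `z - x* = e - u`. As `M u = N e`, the `N`-energy of the new error is
`eᵀNe - 2 uᵀMu + uᵀNu ≤ eᵀNe - (2 - β) uᵀMu`, and expanding `0 ≤ (u - αe)ᵀM(u - αe)` gives
`uᵀMu ≥ α eᵀNe`. With `α = 5/6`, `β = 6/5` the energy contracts by the factor `1/3 ≤ 4/5`.
-/

open Matrix

namespace Matrix

variable {m ι : Type*} [Fintype m] [Fintype ι]

theorem mulVec_dotProduct_mulVec_self (A : Matrix m ι ℝ) (v : ι → ℝ) :
    (A *ᵥ v) ⬝ᵥ (A *ᵥ v) = v ⬝ᵥ ((Aᵀ * A) *ᵥ v) := by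
  rw [← mulVec_mulVec, dotProduct_mulVec v, vecMul_transpose]

theorem dotProduct_mulVec_eq_transpose (M : Matrix ι ι ℝ) (x y : ι → ℝ) :
    x ⬝ᵥ (M *ᵥ y) = y ⬝ᵥ (Mᵀ *ᵥ x) := by
  rw [dotProduct_mulVec y, vecMul_transpose, dotProduct_comm]

theorem IsSymm.dotProduct_mulVec_comm {M : Matrix ι ι ℝ} (hM : M.IsSymm) (x y : ι → ℝ) :
    x ⬝ᵥ (M *ᵥ y) = y ⬝ᵥ (M *ᵥ x) := by
  rw [dotProduct_mulVec_eq_transpose, hM.eq]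

theorem PosDef.of_smul_dotProduct_mulVec_le {M N : Matrix ι ι ℝ} (hM : M.PosDef)
    (hN : N.IsHermitian) {α : ℝ} (hα : 0 < α)
    (h : ∀ x, α * (x ⬝ᵥ (M *ᵥ x)) ≤ x ⬝ᵥ (N *ᵥ x)) : N.PosDef :=
  .of_dotProduct_mulVec_pos hN fun x hx => by
    have hMx : 0 < x ⬝ᵥ (M *ᵥ x) := by simpa using hM.dotProduct_mulVec_pos hx
    simpa using (mul_pos hα hMx).trans_le (h x)

section Preconditioning

variable {M N : Matrix ι ι ℝ} {α β : ℝ} {e u : ι → ℝ}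

theorem PosSemidef.smul_dotProduct_mulVec_le_of_mulVec_eq (hM : M.PosSemidef) (hα : 0 ≤ α)
    (hu : M *ᵥ u = N *ᵥ e) (hlow : α * (e ⬝ᵥ (M *ᵥ e)) ≤ e ⬝ᵥ (N *ᵥ e)) :
    α * (e ⬝ᵥ (N *ᵥ e)) ≤ u ⬝ᵥ (M *ᵥ u) := by
  have hsq : 0 ≤ (u - α • e) ⬝ᵥ (M *ᵥ (u - α • e)) := by
    simpa using hM.dotProduct_mulVec_nonneg (u - α • e)
  have hexpand : (u - α • e) ⬝ᵥ (M *ᵥ (u - α • e)) =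
      u ⬝ᵥ (M *ᵥ u) - 2 * α * (e ⬝ᵥ (N *ᵥ e)) + α * (α * (e ⬝ᵥ (M *ᵥ e))) := by
    have hsymm := (isHermitian_iff_isSymm.mp hM.isHermitian).dotProduct_mulVec_comm u e
    simp only [mulVec_sub, mulVec_smul, dotProduct_sub, sub_dotProduct, dotProduct_smul,
      smul_dotProduct, smul_eq_mul, hsymm, hu]
    ring
  linarith [mul_le_mul_of_nonneg_left hlow hα]

theorem dotProduct_mulVec_sub_le (hM : M.PosSemidef) (hN : N.IsSymm) (hα : 0 ≤ α) (hβ : β ≤ 2)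
    (hu : M *ᵥ u = N *ᵥ e) (hlow : α * (e ⬝ᵥ (M *ᵥ e)) ≤ e ⬝ᵥ (N *ᵥ e))
    (hup : u ⬝ᵥ (N *ᵥ u) ≤ β * (u ⬝ᵥ (M *ᵥ u))) :
    (e - u) ⬝ᵥ (N *ᵥ (e - u)) ≤ (1 - (2 - β) * α) * (e ⬝ᵥ (N *ᵥ e)) := by
  have hexpand : (e - u) ⬝ᵥ (N *ᵥ (e - u)) =
      e ⬝ᵥ (N *ᵥ e) - 2 * (u ⬝ᵥ (M *ᵥ u)) + u ⬝ᵥ (N *ᵥ u) := by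
    have hMu : u ⬝ᵥ (N *ᵥ e) = u ⬝ᵥ (M *ᵥ u) := by rw [hu]
    simp only [mulVec_sub, dotProduct_sub, sub_dotProduct, hN.dotProduct_mulVec_comm e u, hMu]
    ring
  have hgain := hM.smul_dotProduct_mulVec_le_of_mulVec_eq hα hu hlow
  linarith [mul_le_mul_of_nonneg_left hgain (sub_nonneg.mpr hβ)]

theorem PosDef.dotProduct_mulVec_sub_inv_mulVec_le [DecidableEq ι] (hM : M.PosDef)
    (hN : N.IsSymm) (hα : 0 ≤ α) (hβ : β ≤ 2)
    (hlow : ∀ x, α * (x ⬝ᵥ (M *ᵥ x)) ≤ x ⬝ᵥ (N *ᵥ x))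
    (hup : ∀ x, x ⬝ᵥ (N *ᵥ x) ≤ β * (x ⬝ᵥ (M *ᵥ x))) (e : ι → ℝ) :
    (e - M⁻¹ *ᵥ (N *ᵥ e)) ⬝ᵥ (N *ᵥ (e - M⁻¹ *ᵥ (N *ᵥ e))) ≤
      (1 - (2 - β) * α) * (e ⬝ᵥ (N *ᵥ e)) := by
  have hu : M *ᵥ (M⁻¹ *ᵥ (N *ᵥ e)) = N *ᵥ e := by
    rw [mulVec_mulVec, mul_nonsing_inv _ (isUnit_iff_isUnit_det M |>.mp hM.isUnit), one_mulVec]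
  exact dotProduct_mulVec_sub_le hM.posSemidef hN hα hβ hu (hlow e) (hup _)

end Preconditioning

end Matrix

theorem stmt_8 {n m d : ℕ} (A : Matrix (Fin n) (Fin d) ℝ) (B : Matrix (Fin m) (Fin d) ℝ)
    (b : Fin n → ℝ) (x₀ z xs : Fin d → ℝ)
    (hB : (Bᵀ * B).PosDef)
    (hlow : ∀ x : Fin d → ℝ, (5 / 6) * (x ⬝ᵥ ((Bᵀ * B) *ᵥ x)) ≤ x ⬝ᵥ ((Aᵀ * A) *ᵥ x))
    (hup : ∀ x : Fin d → ℝ, x ⬝ᵥ ((Aᵀ * A) *ᵥ x) ≤ (6 / 5) * (x ⬝ᵥ ((Bᵀ * B) *ᵥ x)))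
    (hz : z = x₀ - (Bᵀ * B)⁻¹ *ᵥ (Aᵀ *ᵥ (A *ᵥ x₀ - b)))
    (hxs : xs = (Aᵀ * A)⁻¹ *ᵥ (Aᵀ *ᵥ b)) :
    (1 / 2) * ((A *ᵥ z - A *ᵥ xs) ⬝ᵥ (A *ᵥ z - A *ᵥ xs)) ≤
      (4 / 10) * ((A *ᵥ x₀ - A *ᵥ xs) ⬝ᵥ (A *ᵥ x₀ - A *ᵥ xs)) := by
  have hNsymm : (Aᵀ * A).IsHermitian := by simpa using isHermitian_conjTranspose_mul_self A
  have hN : (Aᵀ * A).PosDef := .of_smul_dotProduct_mulVec_le hB hNsymm (by norm_num) hlow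
  have hNxs : (Aᵀ * A) *ᵥ xs = Aᵀ *ᵥ b := by
    rw [hxs, mulVec_mulVec, mul_nonsing_inv _ (isUnit_iff_isUnit_det _ |>.mp hN.isUnit),
      one_mulVec]
  have herr : z - xs = (x₀ - xs) - (Bᵀ * B)⁻¹ *ᵥ ((Aᵀ * A) *ᵥ (x₀ - xs)) := by
    rw [hz, mulVec_sub (Aᵀ * A), hNxs, ← mulVec_mulVec, ← mulVec_sub]
    abel
  have hstep := hB.dotProduct_mulVec_sub_inv_mulVec_le (isHermitian_iff_isSymm.mp hNsymm)
    (by norm_num) (by norm_num) hlow hup (x₀ - xs)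
  have hnonneg : 0 ≤ (x₀ - xs) ⬝ᵥ ((Aᵀ * A) *ᵥ (x₀ - xs)) := by
    simpa using hN.posSemidef.dotProduct_mulVec_nonneg (x₀ - xs)
  rw [← mulVec_sub, ← mulVec_sub, mulVec_dotProduct_mulVec_self, mulVec_dotProduct_mulVec_self,
    herr]
  linarith
end

section
/- Let A, B satisfy (5/6)BᵀB ⪯ AᵀA ⪯ (6/5)BᵀB with both positive definite, let x*, z be as in the preconditioned step, and suppose x satisfies ‖Bx − Bz‖₂² ≤ (1/200)‖Ax₀ − Ax*‖₂². Then ‖Ax − Ax*‖₂ ≤ 0.9·‖Ax₀ − Ax*‖₂. -/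
open Matrix BigOperators

lemma qform_aux {k d : ℕ} (C : Matrix (Fin k) (Fin d) ℝ) (v w : Fin d → ℝ) :
    v ⬝ᵥ ((Cᵀ * C) *ᵥ w) = (C *ᵥ v) ⬝ᵥ (C *ᵥ w) := by
  rw [← Matrix.mulVec_mulVec, Matrix.dotProduct_mulVec, Matrix.vecMul_transpose]

lemma sqrt_dot_eq_norm_aux {k : ℕ} (v : Fin k → ℝ) :
    Real.sqrt (v ⬝ᵥ v) = ‖(EuclideanSpace.equiv (Fin k) ℝ).symm v‖ := by
  rw [EuclideanSpace.norm_eq]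
  congr 1
  simp [dotProduct, Real.norm_eq_abs, sq_abs, sq]

lemma sqrt_dot_triangle_aux {k : ℕ} (a c : Fin k → ℝ) :
    Real.sqrt ((a + c) ⬝ᵥ (a + c)) ≤ Real.sqrt (a ⬝ᵥ a) + Real.sqrt (c ⬝ᵥ c) := by
  simp only [sqrt_dot_eq_norm_aux]
  rw [map_add]
  exact norm_add_le _ _

lemma dot_self_nonneg_aux {k : ℕ} (v : Fin k → ℝ) : 0 ≤ v ⬝ᵥ v :=
  Finset.sum_nonneg fun i _ => mul_self_nonneg (v i)

lemma dot_sub_expand_aux {k : ℕ} (p q : Fin k → ℝ) :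
    (p - q) ⬝ᵥ (p - q) = p ⬝ᵥ p - 2 * (p ⬝ᵥ q) + q ⬝ᵥ q := by
  rw [sub_dotProduct, dotProduct_sub, dotProduct_sub,
    dotProduct_comm q p]
  ring

theorem stmt_9 {n m d : ℕ} (A : Matrix (Fin n) (Fin d) ℝ) (B : Matrix (Fin m) (Fin d) ℝ)
    (b : Fin n → ℝ) (x₀ z xs x : Fin d → ℝ)
    (hA : (Aᵀ * A).PosDef) (hB : (Bᵀ * B).PosDef)
    (hlow : ∀ y : Fin d → ℝ, (5 / 6) * (y ⬝ᵥ ((Bᵀ * B) *ᵥ y)) ≤ y ⬝ᵥ ((Aᵀ * A) *ᵥ y))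
    (hup : ∀ y : Fin d → ℝ, y ⬝ᵥ ((Aᵀ * A) *ᵥ y) ≤ (6 / 5) * (y ⬝ᵥ ((Bᵀ * B) *ᵥ y)))
    (hz : z = x₀ - (Bᵀ * B)⁻¹ *ᵥ (Aᵀ *ᵥ (A *ᵥ x₀ - b)))
    (hxs : xs = (Aᵀ * A)⁻¹ *ᵥ (Aᵀ *ᵥ b))
    (hx : (B *ᵥ x - B *ᵥ z) ⬝ᵥ (B *ᵥ x - B *ᵥ z) ≤
      (1 / 200) * ((A *ᵥ x₀ - A *ᵥ xs) ⬝ᵥ (A *ᵥ x₀ - A *ᵥ xs))) :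
    Real.sqrt ((A *ᵥ x - A *ᵥ xs) ⬝ᵥ (A *ᵥ x - A *ᵥ xs)) ≤
      0.9 * Real.sqrt ((A *ᵥ x₀ - A *ᵥ xs) ⬝ᵥ (A *ᵥ x₀ - A *ᵥ xs)) := by
  have qA : ∀ v w : Fin d → ℝ, v ⬝ᵥ ((Aᵀ * A) *ᵥ w) = (A *ᵥ v) ⬝ᵥ (A *ᵥ w) := qform_aux A
  have qB : ∀ v w : Fin d → ℝ, v ⬝ᵥ ((Bᵀ * B) *ᵥ w) = (B *ᵥ v) ⬝ᵥ (B *ᵥ w) := qform_aux B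
  set M : Matrix (Fin d) (Fin d) ℝ := Aᵀ * A with hMdef
  set N : Matrix (Fin d) (Fin d) ℝ := Bᵀ * B with hNdef
  set e : Fin d → ℝ := x₀ - xs with he
  set u : Fin d → ℝ := N⁻¹ *ᵥ (M *ᵥ e) with hu
  have hMdet : IsUnit M.det := (Matrix.isUnit_iff_isUnit_det M).mp hA.isUnit
  have hNdet : IsUnit N.det := (Matrix.isUnit_iff_isUnit_det N).mp hB.isUnit
  have hMxs : M *ᵥ xs = Aᵀ *ᵥ b := by
    rw [hxs, Matrix.mulVec_mulVec, Matrix.mul_nonsing_inv _ hMdet, Matrix.one_mulVec]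
  have hgrad : Aᵀ *ᵥ (A *ᵥ x₀ - b) = M *ᵥ e := by
    rw [Matrix.mulVec_sub, Matrix.mulVec_mulVec, ← hMdef, ← hMxs, ← Matrix.mulVec_sub]
  have hNu : N *ᵥ u = M *ᵥ e := by
    rw [hu, Matrix.mulVec_mulVec, Matrix.mul_nonsing_inv _ hNdet, Matrix.one_mulVec]
  have hzxs : z - xs = e - u := by
    rw [hz, hgrad, he]
    abel
  have hAe : A *ᵥ e = A *ᵥ x₀ - A *ᵥ xs := by rw [he, Matrix.mulVec_sub]
  set qe : ℝ := (A *ᵥ e) ⬝ᵥ (A *ᵥ e) with hqe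
  have hqe0 : 0 ≤ qe := dot_self_nonneg_aux _
  -- cross term: ⟨Ae, Au⟩ = ⟨Bu, Bu⟩
  have f1 : (A *ᵥ e) ⬝ᵥ (A *ᵥ u) = (B *ᵥ u) ⬝ᵥ (B *ᵥ u) := by
    rw [← qA e u, show e ⬝ᵥ (M *ᵥ u) = u ⬝ᵥ (M *ᵥ e) by
      rw [qA, qA, dotProduct_comm], ← hNu, qB]
  -- ⟨Be, Bu⟩ = qe
  have f2 : (B *ᵥ e) ⬝ᵥ (B *ᵥ u) = qe := by
    rw [← qB, hNu, qA, hqe]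
  -- upper bound on ⟨Au,Au⟩
  have f3 : (A *ᵥ u) ⬝ᵥ (A *ᵥ u) ≤ (6 / 5) * ((B *ᵥ u) ⬝ᵥ (B *ᵥ u)) := by
    have := hup u; rwa [qA, qB] at this
  -- ⟨Be,Be⟩ ≤ 6/5 qe
  have f4 : (B *ᵥ e) ⬝ᵥ (B *ᵥ e) ≤ (6 / 5) * qe := by
    have := hlow e; rw [qA, qB] at this; linarith
  -- lower bound on ⟨Bu,Bu⟩
  have f5 : (5 / 6) * qe ≤ (B *ᵥ u) ⬝ᵥ (B *ᵥ u) := by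
    have h0 : 0 ≤ (B *ᵥ u - (5 / 6 : ℝ) • (B *ᵥ e)) ⬝ᵥ (B *ᵥ u - (5 / 6 : ℝ) • (B *ᵥ e)) :=
      dot_self_nonneg_aux _
    rw [dot_sub_expand_aux] at h0
    rw [dotProduct_smul, smul_dotProduct, dotProduct_smul,
      smul_eq_mul, smul_eq_mul, smul_eq_mul, dotProduct_comm (B *ᵥ u) (B *ᵥ e), f2] at h0
    nlinarith [f4]
  -- contraction of the preconditioned step
  have hstep : (A *ᵥ z - A *ᵥ xs) ⬝ᵥ (A *ᵥ z - A *ᵥ xs) ≤ (1 / 3) * qe := by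
    have hv : A *ᵥ z - A *ᵥ xs = A *ᵥ e - A *ᵥ u := by
      rw [← Matrix.mulVec_sub, ← Matrix.mulVec_sub, hzxs]
    rw [hv, dot_sub_expand_aux, f1]
    nlinarith [f3, f5]
  -- spectral bound for the first leg
  have hleg : (A *ᵥ x - A *ᵥ z) ⬝ᵥ (A *ᵥ x - A *ᵥ z) ≤ (3 / 500) * qe := by
    have hw : A *ᵥ x - A *ᵥ z = A *ᵥ (x - z) := (Matrix.mulVec_sub A x z).symm
    have hwB : B *ᵥ x - B *ᵥ z = B *ᵥ (x - z) := (Matrix.mulVec_sub B x z).symm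
    have h1 := hup (x - z)
    rw [qA, qB] at h1
    rw [hwB, ← hAe] at hx
    rw [hw]
    nlinarith [dot_self_nonneg_aux (B *ᵥ (x - z))]
  -- assemble
  have htr : Real.sqrt ((A *ᵥ x - A *ᵥ xs) ⬝ᵥ (A *ᵥ x - A *ᵥ xs)) ≤
      Real.sqrt ((A *ᵥ x - A *ᵥ z) ⬝ᵥ (A *ᵥ x - A *ᵥ z)) +
      Real.sqrt ((A *ᵥ z - A *ᵥ xs) ⬝ᵥ (A *ᵥ z - A *ᵥ xs)) := by
    have := sqrt_dot_triangle_aux (A *ᵥ x - A *ᵥ z) (A *ᵥ z - A *ᵥ xs)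
    rwa [sub_add_sub_cancel] at this
  have hs1 : Real.sqrt ((A *ᵥ x - A *ᵥ z) ⬝ᵥ (A *ᵥ x - A *ᵥ z)) ≤ 0.08 * Real.sqrt qe := by
    calc Real.sqrt ((A *ᵥ x - A *ᵥ z) ⬝ᵥ (A *ᵥ x - A *ᵥ z))
        ≤ Real.sqrt ((3 / 500) * qe) := Real.sqrt_le_sqrt hleg
      _ ≤ Real.sqrt ((0.08) ^ 2 * qe) := Real.sqrt_le_sqrt (by nlinarith)
      _ = 0.08 * Real.sqrt qe := by
          rw [Real.sqrt_mul (by positivity), Real.sqrt_sq (by norm_num)]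
  have hs2 : Real.sqrt ((A *ᵥ z - A *ᵥ xs) ⬝ᵥ (A *ᵥ z - A *ᵥ xs)) ≤ 0.58 * Real.sqrt qe := by
    calc Real.sqrt ((A *ᵥ z - A *ᵥ xs) ⬝ᵥ (A *ᵥ z - A *ᵥ xs))
        ≤ Real.sqrt ((1 / 3) * qe) := Real.sqrt_le_sqrt hstep
      _ ≤ Real.sqrt ((0.58) ^ 2 * qe) := Real.sqrt_le_sqrt (by nlinarith)
      _ = 0.58 * Real.sqrt qe := by
          rw [Real.sqrt_mul (by positivity), Real.sqrt_sq (by norm_num)]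
  have hfin : Real.sqrt ((A *ᵥ x₀ - A *ᵥ xs) ⬝ᵥ (A *ᵥ x₀ - A *ᵥ xs)) = Real.sqrt qe := by
    rw [hqe, hAe]
  rw [hfin]
  have hsq : 0 ≤ Real.sqrt qe := Real.sqrt_nonneg _
  linarith
end

section
/- Let D be a distribution over [n] with probabilities p_k = τ_k/∑_j τ_j where τ_k = min(1, 20·u_k·log d) and u_k ≥ σ_k(A) (leverage score overestimates). For x̃ ∈ ℝ^d define the change-of-basis functions g_i(x) := (1/p_i)·f_i((AᵀA)^{-1/2}x) where f_i(x) = ψ_i(a_iᵀx) and ψ_i'' ≤ M. Then tr(∇²g_i(x)) ≤ (∑_j τ_j)·M·(σ_i(A)/τ_i) ≤ (∑_j τ_j)·M for every i with τ_i > 0; in particular each g_i is ((∑_j τ_j)·M)-smooth. -/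
/-!
With `w = (AᵀA)^{-1/2} aᵢ` the Hessian is `(1/pᵢ) ψᵢ''(·) w wᵀ`, a rank-one matrix whose trace and
whose Rayleigh quotients are at most `(1/pᵢ) M ‖w‖²`; and `‖w‖² = σᵢ`, `1/pᵢ = (∑ τ)/τᵢ`.
Leverage scores satisfy `σᵢ ≤ 1` and `σᵢ ≤ uᵢ`, and `20 log d ≥ 1` for `d ≥ 2`, so `σᵢ ≤ τᵢ`.
-/

open Matrix BigOperators

/-- The square root of a positive semidefinite matrix, as `Matrix.PosSemidef.sqrt` was defined
in the older Mathlib (removed since). -/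
noncomputable def posSemidefSqrt {n : Type*} [Fintype n] [DecidableEq n]
    {A : Matrix n n ℝ} (hA : A.PosSemidef) : Matrix n n ℝ :=
  hA.1.eigenvectorUnitary.1 * diagonal ((↑) ∘ (√·) ∘ hA.1.eigenvalues) *
    (star hA.1.eigenvectorUnitary : Matrix n n ℝ)

section posSemidefSqrt

variable {ι : Type*} [Fintype ι] [DecidableEq ι] {A : Matrix ι ι ℝ} (hA : A.PosSemidef)

theorem posSemidefSqrt_transpose : (posSemidefSqrt hA)ᵀ = posSemidefSqrt hA := by
  rw [← conjTranspose_eq_transpose_of_trivial]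
  simp [posSemidefSqrt, star_eq_conjTranspose, Matrix.mul_assoc]

theorem posSemidefSqrt_mul_self : posSemidefSqrt hA * posSemidefSqrt hA = A := by
  set U : Matrix ι ι ℝ := hA.1.eigenvectorUnitary.1
  have hU : star U * U = 1 := Unitary.coe_star_mul_self _
  conv_rhs => rw [hA.1.spectral_theorem, Unitary.conjStarAlgAut_apply]
  calc posSemidefSqrt hA * posSemidefSqrt hA
      = U * (diagonal ((↑) ∘ (√·) ∘ hA.1.eigenvalues) * (star U * U) *
          diagonal ((↑) ∘ (√·) ∘ hA.1.eigenvalues)) * star U := by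
        simp only [posSemidefSqrt, U, Matrix.mul_assoc]
    _ = _ := by
        rw [hU, Matrix.mul_one, diagonal_mul_diagonal]
        congr 3
        funext j
        simp [Real.mul_self_sqrt (hA.eigenvalues_nonneg j)]

theorem dotProduct_inv_posSemidefSqrt_mulVec_self (a : ι → ℝ) :
    ((posSemidefSqrt hA)⁻¹ *ᵥ a) ⬝ᵥ ((posSemidefSqrt hA)⁻¹ *ᵥ a) = a ⬝ᵥ (A⁻¹ *ᵥ a) := by
  rw [dotProduct_mulVec, ← mulVec_transpose, transpose_nonsing_inv, posSemidefSqrt_transpose,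
    mulVec_mulVec, ← Matrix.mul_inv_rev, posSemidefSqrt_mul_self, dotProduct_comm]

end posSemidefSqrt

section leverageScore

variable {m d : Type*} [Fintype m] [Fintype d] [DecidableEq d] (A : Matrix m d ℝ)

noncomputable def leverageScore (k : m) : ℝ := A k ⬝ᵥ ((Aᵀ * A)⁻¹ *ᵥ A k)

variable {A}

/-- With `v = (AᵀA)⁻¹ aₖ` the leverage score is `σ = aₖ ⬝ v = ‖A v‖² ≥ (A v)ₖ² = σ²`. -/
theorem leverageScore_sq_le (hA : IsUnit (Aᵀ * A).det) (k : m) :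
    leverageScore A k ^ 2 ≤ leverageScore A k := by
  set v := (Aᵀ * A)⁻¹ *ᵥ A k
  have hAv : (A *ᵥ v) k = A k ⬝ᵥ v := rfl
  have hv : (Aᵀ * A) *ᵥ v = A k := by rw [mulVec_mulVec, mul_nonsing_inv _ hA, one_mulVec]
  have hnorm : (A *ᵥ v) ⬝ᵥ (A *ᵥ v) = A k ⬝ᵥ v := by
    rw [dotProduct_mulVec, vecMul_mulVec, ← dotProduct_mulVec, hv, dotProduct_comm]
  calc (A k ⬝ᵥ v) ^ 2 = (A *ᵥ v) k * (A *ᵥ v) k := by rw [hAv, sq]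
    _ ≤ (A *ᵥ v) ⬝ᵥ (A *ᵥ v) :=
        Finset.single_le_sum (f := fun j => (A *ᵥ v) j * (A *ᵥ v) j)
          (fun j _ => mul_self_nonneg _) (Finset.mem_univ k)
    _ = A k ⬝ᵥ v := hnorm

theorem leverageScore_nonneg (hA : IsUnit (Aᵀ * A).det) (k : m) : 0 ≤ leverageScore A k := by
  nlinarith [leverageScore_sq_le hA k]

theorem leverageScore_le_one (hA : IsUnit (Aᵀ * A).det) (k : m) : leverageScore A k ≤ 1 := by
  nlinarith [leverageScore_sq_le hA k]

end leverageScore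

theorem le_min_one_mul_log {σ u : ℝ} {d : ℕ} (hd : 2 ≤ d) (hσ0 : 0 ≤ σ) (hσ1 : σ ≤ 1)
    (hσu : σ ≤ u) : σ ≤ min 1 (20 * u * Real.log d) := by
  have hlog : 1 ≤ 20 * Real.log d := by
    have : Real.log 2 ≤ Real.log d := Real.log_le_log (by norm_num) (by exact_mod_cast hd)
    linarith [Real.log_two_gt_d9]
  refine le_min hσ1 ?_
  nlinarith

theorem dotProduct_vecMulVec_self_mulVec_le {ι : Type*} [Fintype ι] (w v : ι → ℝ) :
    v ⬝ᵥ (vecMulVec w w *ᵥ v) ≤ (w ⬝ᵥ w) * (v ⬝ᵥ v) := by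
  have hcs := Finset.sum_mul_sq_le_sq_mul_sq Finset.univ w v
  rw [vecMulVec_mulVec, dotProduct_comm]
  simpa [dotProduct, sq, Finset.sum_mul, mul_comm, mul_left_comm, mul_assoc] using hcs

section rankOne

variable {ι : Type*} [Fintype ι] {s c M : ℝ} (hs : 0 ≤ s) (hcM : c ≤ M) (w : ι → ℝ)
include hs hcM

theorem trace_smul_smul_vecMulVec_self_le :
    (s • c • vecMulVec w w).trace ≤ s * M * (w ⬝ᵥ w) := by
  have hww : 0 ≤ w ⬝ᵥ w := Finset.sum_nonneg fun j _ => mul_self_nonneg _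
  rw [trace_smul, trace_smul, trace_vecMulVec, smul_eq_mul, smul_eq_mul, ← mul_assoc]
  gcongr

theorem dotProduct_smul_smul_vecMulVec_self_mulVec_le (hM : 0 ≤ M) (v : ι → ℝ) :
    v ⬝ᵥ ((s • c • vecMulVec w w) *ᵥ v) ≤ s * M * (w ⬝ᵥ w) * (v ⬝ᵥ v) := by
  have hq : 0 ≤ v ⬝ᵥ (vecMulVec w w *ᵥ v) := by
    rw [vecMulVec_mulVec, dotProduct_comm]
    simpa [← sq] using sq_nonneg (w ⬝ᵥ v)
  rw [smul_mulVec, smul_mulVec, dotProduct_smul, dotProduct_smul, smul_eq_mul, smul_eq_mul]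
  calc s * (c * (v ⬝ᵥ (vecMulVec w w *ᵥ v)))
      ≤ s * (M * (v ⬝ᵥ (vecMulVec w w *ᵥ v))) := by gcongr
    _ ≤ s * (M * ((w ⬝ᵥ w) * (v ⬝ᵥ v))) := by
        gcongr
        exact dotProduct_vecMulVec_self_mulVec_le w v
    _ = s * M * (w ⬝ᵥ w) * (v ⬝ᵥ v) := by ring

end rankOne

theorem stmt_18_general {n d : ℕ} (hd : 2 ≤ d) (A : Matrix (Fin n) (Fin d) ℝ)
    (hPD : (Aᵀ * A).PosDef) (hPSD : (Aᵀ * A).PosSemidef)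
    (ψ : Fin n → ℝ → ℝ) (M : ℝ) (hM : 1 ≤ M)
    (hψ : ∀ i t, deriv (deriv (ψ i)) t ≤ M)
    (u τ p : Fin n → ℝ)
    (hu : ∀ k, A k ⬝ᵥ ((Aᵀ * A)⁻¹ *ᵥ A k) ≤ u k)
    (hτ : ∀ k, τ k = min 1 (20 * u k * Real.log d))
    (hp : ∀ k, p k = τ k / ∑ j, τ j) :
    ∀ i, 0 < τ i → ∀ x : Fin d → ℝ,
      ((1 / p i) • (deriv (deriv (ψ i)) (((posSemidefSqrt hPSD)⁻¹ *ᵥ A i) ⬝ᵥ x) •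
          Matrix.vecMulVec ((posSemidefSqrt hPSD)⁻¹ *ᵥ A i) ((posSemidefSqrt hPSD)⁻¹ *ᵥ A i))).trace ≤
        (∑ j, τ j) * M * ((A i ⬝ᵥ ((Aᵀ * A)⁻¹ *ᵥ A i)) / τ i) ∧
      (∑ j, τ j) * M * ((A i ⬝ᵥ ((Aᵀ * A)⁻¹ *ᵥ A i)) / τ i) ≤ (∑ j, τ j) * M ∧
      ∀ v : Fin d → ℝ,
        v ⬝ᵥ (((1 / p i) • (deriv (deriv (ψ i)) (((posSemidefSqrt hPSD)⁻¹ *ᵥ A i) ⬝ᵥ x) •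
            Matrix.vecMulVec ((posSemidefSqrt hPSD)⁻¹ *ᵥ A i) ((posSemidefSqrt hPSD)⁻¹ *ᵥ A i))) *ᵥ v) ≤
          (∑ j, τ j) * M * (v ⬝ᵥ v) := by
  intro i hτi x
  have hA : IsUnit (Aᵀ * A).det := hPD.det_pos.ne'.isUnit
  have hστ : ∀ k, leverageScore A k ≤ τ k := fun k =>
    hτ k ▸ le_min_one_mul_log hd (leverageScore_nonneg hA k) (leverageScore_le_one hA k) (hu k)
  set T := ∑ j, τ j
  have hT : 0 ≤ T := Finset.sum_nonneg fun k _ => (leverageScore_nonneg hA k).trans (hστ k)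
  have hp_inv : 1 / p i = T / τ i := by rw [hp i, one_div_div]
  have hs : 0 ≤ 1 / p i := hp_inv ▸ div_nonneg hT hτi.le
  have hweight : 1 / p i * M * (((posSemidefSqrt hPSD)⁻¹ *ᵥ A i) ⬝ᵥ
      ((posSemidefSqrt hPSD)⁻¹ *ᵥ A i)) = T * M * (leverageScore A i / τ i) := by
    rw [dotProduct_inv_posSemidefSqrt_mulVec_self, hp_inv, leverageScore]
    ring
  have hratio : T * M * (leverageScore A i / τ i) ≤ T * M :=
    mul_le_of_le_one_right (by positivity) ((div_le_one hτi).mpr (hστ i))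
  refine ⟨hweight ▸ trace_smul_smul_vecMulVec_self_le hs (hψ i _) _, hratio, fun v => ?_⟩
  calc _ ≤ _ := dotProduct_smul_smul_vecMulVec_self_mulVec_le hs (hψ i _) _ (by linarith) v
    _ ≤ T * M * (v ⬝ᵥ v) := by
        rw [hweight]
        exact mul_le_mul_of_nonneg_right hratio (Finset.sum_nonneg fun j _ => mul_self_nonneg _)

theorem stmt_18 {n d : ℕ} (hd : 2 ≤ d) (A : Matrix (Fin n) (Fin d) ℝ)
    (hPD : (Aᵀ * A).PosDef) (hPSD : (Aᵀ * A).PosSemidef)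
    (ψ : Fin n → ℝ → ℝ) (M : ℝ) (hM : 1 ≤ M)
    (hψ : ∀ i t, deriv (deriv (ψ i)) t ≤ M) (hψ0 : ∀ i t, 0 ≤ deriv (deriv (ψ i)) t)
    (u τ p : Fin n → ℝ)
    (hu : ∀ k, A k ⬝ᵥ ((Aᵀ * A)⁻¹ *ᵥ A k) ≤ u k)
    (hτ : ∀ k, τ k = min 1 (20 * u k * Real.log d))
    (hp : ∀ k, p k = τ k / ∑ j, τ j) :
    ∀ i, 0 < τ i → ∀ x : Fin d → ℝ,
      ((1 / p i) • (deriv (deriv (ψ i)) (((posSemidefSqrt hPSD)⁻¹ *ᵥ A i) ⬝ᵥ x) •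
          Matrix.vecMulVec ((posSemidefSqrt hPSD)⁻¹ *ᵥ A i) ((posSemidefSqrt hPSD)⁻¹ *ᵥ A i))).trace ≤
        (∑ j, τ j) * M * ((A i ⬝ᵥ ((Aᵀ * A)⁻¹ *ᵥ A i)) / τ i) ∧
      (∑ j, τ j) * M * ((A i ⬝ᵥ ((Aᵀ * A)⁻¹ *ᵥ A i)) / τ i) ≤ (∑ j, τ j) * M ∧
      ∀ v : Fin d → ℝ,
        v ⬝ᵥ (((1 / p i) • (deriv (deriv (ψ i)) (((posSemidefSqrt hPSD)⁻¹ *ᵥ A i) ⬝ᵥ x) •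
            Matrix.vecMulVec ((posSemidefSqrt hPSD)⁻¹ *ᵥ A i) ((posSemidefSqrt hPSD)⁻¹ *ᵥ A i))) *ᵥ v) ≤
          (∑ j, τ j) * M * (v ⬝ᵥ v) :=
  stmt_18_general hd A hPD hPSD ψ M hM hψ u τ p hu hτ hp
end
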